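/- arXiv:1711.08442 — 2 statements merged into one kernel-verified Lean document; each statement's English description precedes it below -/
import Mathlib

section
/- Let Φ' be the state-collapsed Markov chain of Definition (collapsing a stopping set S into a single state s) obtained from an irreducible time-reversible chain Φ on a finite state space. Then Φ' is irreducible, and its stationary distribution assigns to each non-collapsed state x the same probability π(x) as in the original chain Φ, and assigns probability Z_S/Z to the collapsed state s. -/
/-!
Collapsing `S` is the lumping of `Φ` along the map `collapse S`, which sends `S` to the new
state and fixes every other state. Reversibility makes `π` stationary for `Φ`, and since the
weights `e^{-E y} / Z_S` are the conditional law of `π` on `S`, the probability flow of `Φ'` from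
`a` to `b` is the `π`-flow of `Φ` from the fibre of `a` to the fibre of `b`. Summing over `a`
shows that the push-forward of `π` is stationary for `Φ'`. Irreducibility passes to `Φ'`
because `collapse S` is surjective and maps every positive transition of `Φ` to a positive
transition of `Φ'`.
-/

open Finset

namespace Matrix

variable {α β R : Type*} [Fintype α] [Fintype β] [DecidableEq α] [DecidableEq β]
  [Semiring R] [LinearOrder R] [IsStrictOrderedRing R]

theorem pow_apply_pos_of_map {M : Matrix α α R} {N : Matrix β β R}
    (hM : ∀ i j, 0 ≤ M i j) (hN : ∀ i j, 0 ≤ N i j) (φ : α → β)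
    (hedge : ∀ i j, 0 < M i j → 0 < N (φ i) (φ j)) (n : ℕ) (i j : α)
    (h : 0 < (M ^ n) i j) : 0 < (N ^ n) (φ i) (φ j) := by
  induction n generalizing j with
  | zero =>
    obtain rfl : i = j := by
      by_contra hij
      simp [one_apply_ne hij] at h
    simp
  | succ n ih =>
    rw [pow_succ, mul_apply, sum_pos_iff_of_nonneg
      fun c _ => mul_nonneg (pow_apply_nonneg hM n i c) (hM c j)] at h
    obtain ⟨c, -, hc⟩ := h
    have hpow : 0 < (M ^ n) i c := pos_of_mul_pos_left hc (hM c j)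
    have hstep : 0 < M c j := pos_of_mul_pos_right hc (pow_apply_nonneg hM n i c)
    rw [pow_succ, mul_apply]
    exact sum_pos' (fun d _ => mul_nonneg (pow_apply_nonneg hN n _ d) (hN d _))
      ⟨φ c, mem_univ _, mul_pos (ih c hpow) (hedge c j hstep)⟩

theorem exists_pow_apply_pos_of_surjective {M : Matrix α α R} {N : Matrix β β R}
    (hM : ∀ i j, 0 ≤ M i j) (hN : ∀ i j, 0 ≤ N i j) {φ : α → β} (hφ : φ.Surjective)
    (hedge : ∀ i j, 0 < M i j → 0 < N (φ i) (φ j))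
    (hirr : ∀ i j, ∃ n, 0 < (M ^ n) i j) (a b : β) : ∃ n, 0 < (N ^ n) a b := by
  obtain ⟨i, rfl⟩ := hφ a
  obtain ⟨j, rfl⟩ := hφ b
  obtain ⟨n, hn⟩ := hirr i j
  exact ⟨n, pow_apply_pos_of_map hM hN φ hedge n i j hn⟩

end Matrix

theorem sum_mul_eq_of_reversible {Ω R : Type*} [Fintype Ω] [CommSemiring R] {π : Ω → R}
    {p : Ω → Ω → R} (hrev : ∀ x y, π x * p x y = π y * p y x)
    (hrow : ∀ x, ∑ y, p x y = 1) (y : Ω) : ∑ x, π x * p x y = π y := by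
  simp_rw [hrev _ y, ← mul_sum, hrow, mul_one]

section Lumping

variable {Ω β R : Type*} [Fintype Ω] [DecidableEq β] [CommSemiring R] {π : Ω → R}
  {p : Ω → Ω → R} (φ : Ω → β) {μ : β → R} {q : β → β → R}

theorem lumped_nonneg [LinearOrder R] [IsStrictOrderedRing R]
    (hflow : ∀ a b, μ a * q a b = ∑ y with φ y = a, π y * ∑ z with φ z = b, p y z)
    (hπ : ∀ y, 0 ≤ π y) (hp : ∀ y z, 0 ≤ p y z) (hμ : ∀ a, 0 < μ a) (a b : β) :
    0 ≤ q a b := by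
  refine nonneg_of_mul_nonneg_right ?_ (hμ a)
  rw [hflow]
  exact sum_nonneg fun y _ => mul_nonneg (hπ y) (sum_nonneg fun z _ => hp y z)

theorem lumped_pos_of_pos [LinearOrder R] [IsStrictOrderedRing R]
    (hflow : ∀ a b, μ a * q a b = ∑ y with φ y = a, π y * ∑ z with φ z = b, p y z)
    (hπ : ∀ y, 0 < π y) (hp : ∀ y z, 0 ≤ p y z) (hμ : ∀ a, 0 ≤ μ a) {y z : Ω}
    (hyz : 0 < p y z) : 0 < q (φ y) (φ z) := by
  refine pos_of_mul_pos_right ?_ (hμ (φ y))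
  rw [hflow]
  refine sum_pos' (fun y' _ => mul_nonneg (hπ y').le (sum_nonneg fun z' _ => hp y' z'))
    ⟨y, by simp, mul_pos (hπ y) (sum_pos' (fun z' _ => hp y z') ⟨z, by simp, hyz⟩)⟩

theorem lumped_sum_mul_eq [Fintype β]
    (hflow : ∀ a b, μ a * q a b = ∑ y with φ y = a, π y * ∑ z with φ z = b, p y z)
    (hπ : ∀ z, ∑ y, π y * p y z = π z) (hμ : ∀ b, μ b = ∑ y with φ y = b, π y) (b : β) :
    ∑ a, μ a * q a b = μ b := by
  calc ∑ a, μ a * q a b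
      = ∑ y, π y * ∑ z with φ z = b, p y z := by
        simp_rw [hflow]; exact sum_fiberwise _ φ _
    _ = ∑ z with φ z = b, ∑ y, π y * p y z := by
        simp_rw [mul_sum]; exact sum_comm
    _ = μ b := by simp_rw [hπ, hμ]

end Lumping

section Collapse

variable {Ω : Type*} [DecidableEq Ω] (S : Finset Ω)

def collapse (y : Ω) : {x : Ω // x ∉ S} ⊕ Unit :=
  if h : y ∈ S then Sum.inr () else Sum.inl ⟨y, h⟩

theorem collapse_surjective (hS : S.Nonempty) : (collapse S).Surjective := by
  rintro (x | ⟨⟩)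
  · exact ⟨x, dif_neg x.2⟩
  · exact ⟨hS.choose, dif_pos hS.choose_spec⟩

theorem collapse_eq_inl_iff {y : Ω} {x : {x : Ω // x ∉ S}} :
    collapse S y = Sum.inl x ↔ y = x := by
  unfold collapse
  split_ifs with hy
  · simpa using fun h : y = x => x.2 (h ▸ hy)
  · simp [Subtype.ext_iff]

theorem collapse_eq_inr_iff {y : Ω} {u : Unit} : collapse S y = Sum.inr u ↔ y ∈ S := by
  unfold collapse
  split_ifs with hy <;> simpa

variable [Fintype Ω]

theorem filter_collapse_eq_inl (x : {x : Ω // x ∉ S}) :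
    ({y | collapse S y = Sum.inl x} : Finset Ω) = {(x : Ω)} := by
  ext y
  simp [collapse_eq_inl_iff]

theorem filter_collapse_eq_inr (u : Unit) :
    ({y | collapse S y = Sum.inr u} : Finset Ω) = S := by
  ext y
  simp [collapse_eq_inr_iff]

end Collapse

theorem stmt1_general {Ω : Type*} [Fintype Ω] [DecidableEq Ω]
    (p : Ω → Ω → ℝ) (E : Ω → ℝ)
    (hstoch : ∀ x, (∀ y, 0 ≤ p x y) ∧ ∑ y, p x y = 1)
    (hirr : ∀ x y : Ω, ∃ n : ℕ, 0 < (Matrix.of p ^ n) x y)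
    (S : Finset Ω) (hS1 : S.Nonempty)
    (Z : ℝ) (hZ : Z = ∑ y, Real.exp (-E y))
    (π : Ω → ℝ) (hπ : ∀ x, π x = Real.exp (-E x) / Z)
    (hrev : ∀ x y, π x * p x y = π y * p y x)
    (ZS : ℝ) (hZS : ZS = ∑ y ∈ S, Real.exp (-E y))
    (p' : ({x : Ω // x ∉ S} ⊕ Unit) → ({x : Ω // x ∉ S} ⊕ Unit) → ℝ)
    (hp'1 : ∀ x : {x : Ω // x ∉ S},
      p' (Sum.inr ()) (Sum.inl x) = ∑ y ∈ S, (Real.exp (-E y) / ZS) * p y x)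
    (hp'2 : ∀ x : {x : Ω // x ∉ S},
      p' (Sum.inl x) (Sum.inr ()) = ∑ y ∈ S, p (x : Ω) y)
    (hp'3 : p' (Sum.inr ()) (Sum.inr ())
      = ∑ y ∈ S, (Real.exp (-E y) / ZS) * ∑ y' ∈ S, p y y')
    (hp'4 : ∀ x x' : {x : Ω // x ∉ S},
      p' (Sum.inl x) (Sum.inl x') = p (x : Ω) (x' : Ω)) :
    (∀ a b : ({x : Ω // x ∉ S} ⊕ Unit), ∃ n : ℕ, 0 < (Matrix.of p' ^ n) a b) ∧
    (∀ a : ({x : Ω // x ∉ S} ⊕ Unit),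
      0 ≤ Sum.elim (fun x : {x : Ω // x ∉ S} => π (x : Ω)) (fun _ => ZS / Z) a) ∧
    (∑ a : ({x : Ω // x ∉ S} ⊕ Unit),
      Sum.elim (fun x : {x : Ω // x ∉ S} => π (x : Ω)) (fun _ => ZS / Z) a = 1) ∧
    (∀ b : ({x : Ω // x ∉ S} ⊕ Unit),
      ∑ a : ({x : Ω // x ∉ S} ⊕ Unit),
        Sum.elim (fun x : {x : Ω // x ∉ S} => π (x : Ω)) (fun _ => ZS / Z) a * p' a b
        = Sum.elim (fun x : {x : Ω // x ∉ S} => π (x : Ω)) (fun _ => ZS / Z) b) := by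
  have hp : ∀ x y, 0 ≤ p x y := fun x y => (hstoch x).1 y
  have hZS0 : 0 < ZS := hZS ▸ sum_pos (fun y _ => Real.exp_pos _) hS1
  have hZ0 : 0 < Z := hZ ▸ sum_pos (fun y _ => Real.exp_pos _) ⟨hS1.choose, mem_univ _⟩
  have hπ0 : ∀ x, 0 < π x := fun x => hπ x ▸ div_pos (Real.exp_pos _) hZ0
  set μ := Sum.elim (fun x : {x : Ω // x ∉ S} => π (x : Ω)) (fun _ => ZS / Z) with hμ
  have hμ0 : ∀ a, 0 < μ a := Sum.rec (fun x => hπ0 x) fun _ => div_pos hZS0 hZ0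
  have hcond (f : Ω → ℝ) :
      ZS / Z * ∑ y ∈ S, Real.exp (-E y) / ZS * f y = ∑ y ∈ S, π y * f y := by
    rw [mul_sum]
    exact sum_congr rfl fun y _ => by rw [hπ]; field_simp
  have hfibre : ∀ b, μ b = ∑ y with collapse S y = b, π y := by
    rintro (x | u)
    · simp [hμ, filter_collapse_eq_inl]
    · simp [hμ, filter_collapse_eq_inr, hπ, ← sum_div, hZS]
  have hflow : ∀ a b,
      μ a * p' a b = ∑ y with collapse S y = a, π y * ∑ z with collapse S z = b, p y z := by
    rintro (x | ⟨⟩) (x' | ⟨⟩)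
    · simp [hμ, filter_collapse_eq_inl, hp'4]
    · simp [hμ, filter_collapse_eq_inl, filter_collapse_eq_inr, hp'2]
    · simp [hμ, filter_collapse_eq_inl, filter_collapse_eq_inr, hp'1, hcond]
    · simp [hμ, filter_collapse_eq_inr, hp'3, hcond]
  refine ⟨?_, fun a => (hμ0 a).le, ?_, ?_⟩
  · exact Matrix.exists_pow_apply_pos_of_surjective hp
      (lumped_nonneg _ hflow (fun y => (hπ0 y).le) hp hμ0) (collapse_surjective S hS1)
      (fun x y => lumped_pos_of_pos _ hflow hπ0 hp fun a => (hμ0 a).le) hirr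
  · simp_rw [hfibre, sum_fiberwise, hπ, ← sum_div, ← hZ]
    exact div_self hZ0.ne'
  · exact lumped_sum_mul_eq _ hflow (sum_mul_eq_of_reversible hrev fun x => (hstoch x).2) hfibre

/-- **The collapsed chain is irreducible and its stationary distribution agrees
with the original one off the stopping set, giving mass `Z_S / Z` to the
collapsed state.** -/
theorem stmt1 {Ω : Type*} [Fintype Ω] [DecidableEq Ω]
    (p : Ω → Ω → ℝ) (E : Ω → ℝ)
    (hstoch : ∀ x, (∀ y, 0 ≤ p x y) ∧ ∑ y, p x y = 1)
    (hirr : ∀ x y : Ω, ∃ n : ℕ, 0 < (Matrix.of p ^ n) x y)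
    (S : Finset Ω) (hS1 : S.Nonempty) (hS2 : S ≠ Finset.univ)
    (Z : ℝ) (hZ : Z = ∑ y, Real.exp (-E y))
    (π : Ω → ℝ) (hπ : ∀ x, π x = Real.exp (-E x) / Z)
    (hrev : ∀ x y, π x * p x y = π y * p y x)
    (ZS : ℝ) (hZS : ZS = ∑ y ∈ S, Real.exp (-E y))
    (p' : ({x : Ω // x ∉ S} ⊕ Unit) → ({x : Ω // x ∉ S} ⊕ Unit) → ℝ)
    (hp'1 : ∀ x : {x : Ω // x ∉ S},
      p' (Sum.inr ()) (Sum.inl x) = ∑ y ∈ S, (Real.exp (-E y) / ZS) * p y x)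
    (hp'2 : ∀ x : {x : Ω // x ∉ S},
      p' (Sum.inl x) (Sum.inr ()) = ∑ y ∈ S, p (x : Ω) y)
    (hp'3 : p' (Sum.inr ()) (Sum.inr ())
      = ∑ y ∈ S, (Real.exp (-E y) / ZS) * ∑ y' ∈ S, p y y')
    (hp'4 : ∀ x x' : {x : Ω // x ∉ S},
      p' (Sum.inl x) (Sum.inl x') = p (x : Ω) (x' : Ω)) :
    (∀ a b : ({x : Ω // x ∉ S} ⊕ Unit), ∃ n : ℕ, 0 < (Matrix.of p' ^ n) a b) ∧
    (∀ a : ({x : Ω // x ∉ S} ⊕ Unit),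
      0 ≤ Sum.elim (fun x : {x : Ω // x ∉ S} => π (x : Ω)) (fun _ => ZS / Z) a) ∧
    (∑ a : ({x : Ω // x ∉ S} ⊕ Unit),
      Sum.elim (fun x : {x : Ω // x ∉ S} => π (x : Ω)) (fun _ => ZS / Z) a = 1) ∧
    (∀ b : ({x : Ω // x ∉ S} ⊕ Unit),
      ∑ a : ({x : Ω // x ∉ S} ⊕ Unit),
        Sum.elim (fun x : {x : Ω // x ∉ S} => π (x : Ω)) (fun _ => ZS / Z) a * p' a b
        = Sum.elim (fun x : {x : Ω // x ∉ S} => π (x : Ω)) (fun _ => ZS / Z) b) :=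
  stmt1_general p E hstoch hirr S hS1 Z hZ π hπ hrev ZS hZS p' hp'1 hp'2 hp'3 hp'4
end

section
/- With the same setup, taking f ≡ 1 the estimator Ẑ = Z_S · ξ satisfies E[Ẑ] = Z; i.e., the stopping-set weight times the tour length is an unbiased estimator of the partition function of the energy model. -/
/-!
Kac's formula: the expected return time to `s` of a stationary irreducible chain is `1 / π(s)`,
and `π(s) = Z_S / Z`.

Write `𝔼 ξ = ∑ₜ ℙ(ξ > t)`. Up to the null event of never returning, `ξ > t` means that the
path avoids `s` at times `1, …, t`, which has probability `(Aᵗ 1)(s)` for the taboo matrix `A`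
(the transition matrix with all moves into `s` removed). Stationarity gives
`π A = π - π(s) eₛ`, so `π ⬝ Aᵗ⁺¹ 1 = π ⬝ Aᵗ 1 - π(s) (Aᵗ 1)(s)`; this telescopes to
`π(s) ∑_{t<T} (Aᵗ 1)(s) = 1 - π ⬝ A^T 1`, and irreducibility makes `A` leak mass from every
state, so `A^T 1 → 0` geometrically.

The σ-algebra on `Ω` is arbitrary, so cylinder events need not be measurable: their measures
are obtained from subadditivity of `μ` over the finitely many path fibres, which sum to
`μ univ`, and this also makes them null-measurable.
-/

open MeasureTheory

-- `sInf ∅ = 0`: a trajectory that never returns to `s` gets return time `0`.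
noncomputable def retTime {Ω : Type*} (s : Ω) (ω : ℕ → Ω) : ℕ :=
  sInf {t : ℕ | 1 ≤ t ∧ ω t = s}

open Filter Topology Matrix Finset

section Substochastic

variable {n : Type*} [Fintype n] {M : Matrix n n ℝ}

theorem mulVec_mono_of_nonneg (hM : ∀ i j, 0 ≤ M i j) {v w : n → ℝ} (h : v ≤ w) :
    M *ᵥ v ≤ M *ᵥ w := fun i =>
  sum_le_sum fun j _ => mul_le_mul_of_nonneg_left (h j) (hM i j)

variable [DecidableEq n]

theorem pow_mulVec_one_nonneg (hM : ∀ i j, 0 ≤ M i j) (k : ℕ) : 0 ≤ M ^ k *ᵥ 1 := fun i =>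
  sum_nonneg fun j _ => mul_nonneg (pow_apply_nonneg hM k i j) zero_le_one

theorem antitone_pow_mulVec_one (hM : ∀ i j, 0 ≤ M i j) (hM1 : M *ᵥ 1 ≤ 1) :
    Antitone fun k => M ^ k *ᵥ 1 := by
  refine antitone_nat_of_succ_le fun k => ?_
  rw [pow_succ, ← mulVec_mulVec]
  exact mulVec_mono_of_nonneg (pow_apply_nonneg hM k) hM1

theorem pow_mul_mulVec_one_le (hM : ∀ i j, 0 ≤ M i j) {N : ℕ} {c : ℝ} (hc : 0 ≤ c)
    (hN : M ^ N *ᵥ 1 ≤ c • 1) (k : ℕ) :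
    M ^ (N * k) *ᵥ 1 ≤ c ^ k • 1 := by
  induction k with
  | zero => simp
  | succ k ih =>
    calc M ^ (N * (k + 1)) *ᵥ 1 = M ^ (N * k) *ᵥ (M ^ N *ᵥ 1) := by
          rw [mulVec_mulVec, ← pow_add, mul_add_one]
      _ ≤ M ^ (N * k) *ᵥ (c • 1) := mulVec_mono_of_nonneg (pow_apply_nonneg hM _) hN
      _ = c • (M ^ (N * k) *ᵥ 1) := mulVec_smul _ _ _
      _ ≤ c • (c ^ k • 1) := smul_le_smul_of_nonneg_left ih hc
      _ = c ^ (k + 1) • 1 := by rw [smul_smul, pow_succ']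

theorem tendsto_pow_mulVec_one_of_forall_exists_lt_one (hM : ∀ i j, 0 ≤ M i j)
    (hM1 : M *ᵥ 1 ≤ 1) (hleak : ∀ i, ∃ k, (M ^ k *ᵥ 1) i < 1)
    (i : n) : Tendsto (fun k => (M ^ k *ᵥ 1) i) atTop (𝓝 0) := by
  have : Nonempty n := ⟨i⟩
  choose K hK using hleak
  obtain ⟨j₀, hj₀⟩ := Finite.exists_max K
  set N := K j₀ + 1
  obtain ⟨x₀, hx₀⟩ := Finite.exists_max fun x => (M ^ N *ᵥ 1) x
  set c := (M ^ N *ᵥ 1) x₀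
  have hc0 : 0 ≤ c := pow_mulVec_one_nonneg hM N x₀
  have hc1 : c < 1 :=
    (antitone_pow_mulVec_one hM hM1 (Nat.le_succ_of_le (hj₀ x₀)) x₀).trans_lt (hK x₀)
  have hgeom := pow_mul_mulVec_one_le hM hc0 (fun x => by simpa using hx₀ x)
  have hlim : Tendsto (fun k => c ^ (k / N)) atTop (𝓝 0) :=
    (tendsto_pow_atTop_nhds_zero_of_lt_one hc0 hc1).comp
      (Nat.tendsto_div_const_atTop (K j₀).succ_ne_zero)
  refine tendsto_of_tendsto_of_tendsto_of_le_of_le tendsto_const_nhds hlim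
    (fun k => pow_mulVec_one_nonneg hM k i) fun k => ?_
  calc (M ^ k *ᵥ 1) i ≤ (M ^ (N * (k / N)) *ᵥ 1) i :=
        antitone_pow_mulVec_one hM hM1 (Nat.mul_div_le k N) i
    _ ≤ c ^ (k / N) := by simpa using hgeom (k / N) i

end Substochastic

theorem sum_mul_prod_path_eq_dotProduct {n R : Type*} [Fintype n] [DecidableEq n] [CommSemiring R]
    (M : Matrix n n R) (k : ℕ) (f : n → R) :
    ∑ g : Fin (k + 1) → n, f (g 0) * ∏ i : Fin k, M (g i.castSucc) (g i.succ) =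
      f ⬝ᵥ (M ^ k *ᵥ 1) := by
  induction k generalizing f with
  | zero =>
    rw [← (Equiv.funUnique (Fin 1) n).symm.sum_comp]
    simp [dotProduct]
  | succ k ih =>
    rw [← (Fin.consEquiv fun _ => n).sum_comp, Fintype.sum_prod_type, Finset.sum_comm,
      pow_succ', ← mulVec_mulVec, dotProduct_mulVec, ← ih]
    refine sum_congr rfl fun h _ => ?_
    simp [Fin.prod_univ_succ, vecMul, dotProduct, Finset.sum_mul, mul_assoc]

section Taboo

variable {n : Type*} [DecidableEq n]

-- `(taboo P s ^ t *ᵥ 1) x` is the probability that the chain started at `x` avoids `s` at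
-- times `1, …, t`.
def taboo (P : Matrix n n ℝ) (s : n) : Matrix n n ℝ := of fun x y => if y = s then 0 else P x y

theorem taboo_apply (P : Matrix n n ℝ) (s x y : n) :
    taboo P s x y = if y = s then 0 else P x y := rfl

theorem prod_taboo_path {P : Matrix n n ℝ} {s : n} {k : ℕ} (g : Fin (k + 1) → n) :
    ∏ i : Fin k, taboo P s (g i.castSucc) (g i.succ) =
      if ∀ i : Fin k, g i.succ ≠ s then ∏ i : Fin k, P (g i.castSucc) (g i.succ) else 0 := by
  by_cases h : ∀ i : Fin k, g i.succ ≠ s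
  · rw [if_pos h]
    exact prod_congr rfl fun i _ => by rw [taboo_apply, if_neg (h i)]
  · rw [if_neg h]
    push Not at h
    obtain ⟨i, hi⟩ := h
    exact prod_eq_zero (mem_univ i) (by rw [taboo_apply, if_pos hi])

variable [Fintype n] {P : Matrix n n ℝ} {s : n}

theorem taboo_nonneg (hP : P ∈ rowStochastic ℝ n) (x y : n) : 0 ≤ taboo P s x y := by
  rw [taboo_apply]; split_ifs
  exacts [le_rfl, nonneg_of_mem_rowStochastic hP]

theorem taboo_le (hP : P ∈ rowStochastic ℝ n) (x y : n) : taboo P s x y ≤ P x y := by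
  rw [taboo_apply]; split_ifs
  exacts [nonneg_of_mem_rowStochastic hP, le_rfl]

theorem taboo_mulVec_one_add (hP : P ∈ rowStochastic ℝ n) (x : n) :
    (taboo P s *ᵥ 1) x + P x s = 1 := by
  rw [← sum_row_of_mem_rowStochastic hP x, ← Finset.add_sum_erase _ _ (mem_univ s)]
  simp [mulVec, dotProduct, taboo_apply, Finset.sum_ite, Finset.filter_ne', add_comm]

theorem taboo_mulVec_one_le (hP : P ∈ rowStochastic ℝ n) : taboo P s *ᵥ 1 ≤ 1 := fun x =>
  (le_add_of_nonneg_right (nonneg_of_mem_rowStochastic hP)).trans_eq (taboo_mulVec_one_add hP x)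

theorem taboo_mulVec_le (hP : P ∈ rowStochastic ℝ n) {v : n → ℝ} (hv : 0 ≤ v) :
    taboo P s *ᵥ v ≤ P *ᵥ v := fun x =>
  sum_le_sum fun y _ => mul_le_mul_of_nonneg_right (taboo_le hP x y) (hv y)

-- Hitting `s` at time `k + 1` and avoiding `s` at times `1, …, k + 1` are disjoint events.
theorem pow_succ_apply_add_taboo_pow_succ_mulVec_one_le (hP : P ∈ rowStochastic ℝ n) (k : ℕ)
    (x : n) : (P ^ (k + 1)) x s + (taboo P s ^ (k + 1) *ᵥ 1) x ≤ 1 := by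
  induction k generalizing x with
  | zero => rw [zero_add, pow_one, pow_one, add_comm, taboo_mulVec_one_add hP x]
  | succ k ih =>
    set u : n → ℝ := fun y => (P ^ (k + 1)) y s
    set v := taboo P s ^ (k + 1) *ᵥ 1
    calc (P ^ (k + 2)) x s + (taboo P s ^ (k + 2) *ᵥ 1) x = (P *ᵥ u) x + (taboo P s *ᵥ v) x := by
          rw [pow_succ' P, pow_succ' (taboo P s), ← mulVec_mulVec, mul_apply]; rfl
      _ ≤ (P *ᵥ u) x + (P *ᵥ v) x :=
          add_le_add_right (taboo_mulVec_le hP (pow_mulVec_one_nonneg (taboo_nonneg hP) _) x) _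
      _ = (P *ᵥ (u + v)) x := by rw [mulVec_add, Pi.add_apply]
      _ ≤ (P *ᵥ 1) x := mulVec_mono_of_nonneg (fun _ _ => nonneg_of_mem_rowStochastic hP) ih x
      _ = 1 := by rw [one_vecMul_of_mem_rowStochastic hP, Pi.one_apply]

theorem exists_pow_succ_apply_pos (hP : P ∈ rowStochastic ℝ n)
    (hirr : ∀ x y, ∃ k, 0 < (P ^ k) x y) (x y : n) : ∃ k, 0 < (P ^ (k + 1)) x y := by
  obtain ⟨z, hz⟩ : ∃ z, 0 < P x z := by
    by_contra! h
    have := sum_row_of_mem_rowStochastic hP x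
    linarith [sum_nonpos fun z (_ : z ∈ univ) => h z]
  obtain ⟨k, hk⟩ := hirr z y
  refine ⟨k, ?_⟩
  rw [pow_succ', mul_apply]
  exact (mul_pos hz hk).trans_le <| single_le_sum (f := fun w => P x w * (P ^ k) w y)
    (fun w _ => mul_nonneg (nonneg_of_mem_rowStochastic hP) (pow_apply_nonneg
      (fun _ _ => nonneg_of_mem_rowStochastic hP) k w y)) (mem_univ z)

theorem tendsto_taboo_pow_mulVec_one (hP : P ∈ rowStochastic ℝ n)
    (hirr : ∀ x y, ∃ k, 0 < (P ^ k) x y) (x : n) :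
    Tendsto (fun k => (taboo P s ^ k *ᵥ 1) x) atTop (𝓝 0) := by
  refine tendsto_pow_mulVec_one_of_forall_exists_lt_one (taboo_nonneg hP) (taboo_mulVec_one_le hP)
    (fun y => ?_) x
  obtain ⟨k, hk⟩ := exists_pow_succ_apply_pos hP hirr y s
  exact ⟨k + 1, by linarith [pow_succ_apply_add_taboo_pow_succ_mulVec_one_le hP k y (s := s)]⟩

theorem vecMul_taboo {π : n → ℝ} (hπ : π ᵥ* P = π) : π ᵥ* taboo P s = π - Pi.single s (π s) := by
  ext y
  by_cases hy : y = s
  · subst hy; simp [vecMul, dotProduct, taboo_apply]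
  · simpa [vecMul, dotProduct, taboo_apply, hy] using congrFun hπ y

theorem dotProduct_taboo_pow_succ_mulVec_one {π : n → ℝ} (hπ : π ᵥ* P = π) (k : ℕ) :
    π ⬝ᵥ (taboo P s ^ (k + 1) *ᵥ 1) = π ⬝ᵥ (taboo P s ^ k *ᵥ 1) - π s * (taboo P s ^ k *ᵥ 1) s := by
  rw [pow_succ', ← mulVec_mulVec, dotProduct_mulVec, vecMul_taboo hπ, sub_dotProduct,
    single_dotProduct]

theorem mul_sum_taboo_pow_mulVec_one_add {π : n → ℝ} (hπ : π ᵥ* P = π) (hπ1 : π ⬝ᵥ 1 = 1) (T : ℕ) :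
    π s * ∑ t ∈ range T, (taboo P s ^ t *ᵥ 1) s + π ⬝ᵥ (taboo P s ^ T *ᵥ 1) = 1 := by
  induction T with
  | zero => simpa using hπ1
  | succ T ih => rw [sum_range_succ, dotProduct_taboo_pow_succ_mulVec_one hπ]; linarith

theorem hasSum_taboo_pow_mulVec_one (hP : P ∈ rowStochastic ℝ n)
    (hirr : ∀ x y, ∃ k, 0 < (P ^ k) x y) {π : n → ℝ} (hπ : π ᵥ* P = π) (hπ1 : π ⬝ᵥ 1 = 1)
    (hs : π s ≠ 0) : HasSum (fun t => (taboo P s ^ t *ᵥ 1) s) (π s)⁻¹ := by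
  rw [hasSum_iff_tendsto_nat_of_nonneg fun t => pow_mulVec_one_nonneg (taboo_nonneg hP) t s]
  have hdot : Tendsto (fun T => π ⬝ᵥ (taboo P s ^ T *ᵥ 1)) atTop (𝓝 0) := by
    simpa [dotProduct] using tendsto_finsetSum univ fun x _ =>
      (tendsto_taboo_pow_mulVec_one hP hirr x).const_mul (π x)
  have hpartial : (fun T => ∑ t ∈ range T, (taboo P s ^ t *ᵥ 1) s) =
      fun T => (π s)⁻¹ * (1 - π ⬝ᵥ (taboo P s ^ T *ᵥ 1)) := by
    ext T
    rw [← mul_sum_taboo_pow_mulVec_one_add hπ hπ1 T, add_sub_cancel_right, inv_mul_cancel_left₀ hs]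
  rw [hpartial]
  simpa using (hdot.const_sub 1).const_mul (π s)⁻¹

end Taboo

section OuterMeasure

variable {X : Type*} [MeasurableSpace X] {μ : Measure X}

-- `s` differs from the measurable `T'ᶜ` inside `T ∩ T'`, where `T ⊇ s` and `T' ⊇ sᶜ` are
-- measurable hulls; `μ T + μ T' ≤ μ univ = μ (T ∪ T')` forces `μ (T ∩ T') = 0`.
theorem nullMeasurableSet_of_measure_add_measure_compl_le [IsFiniteMeasure μ] {s : Set X}
    (h : μ s + μ sᶜ ≤ μ Set.univ) : NullMeasurableSet s μ := by
  set T := toMeasurable μ s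
  set T' := toMeasurable μ sᶜ
  have hcover : μ Set.univ ≤ μ (T ∪ T') := measure_mono fun x _ => by
    by_cases hx : x ∈ s
    exacts [Or.inl (subset_toMeasurable μ s hx), Or.inr (subset_toMeasurable μ sᶜ hx)]
  have hTT' : μ (T ∩ T') = 0 := by
    have := measure_union_add_inter (μ := μ) T (measurableSet_toMeasurable μ sᶜ)
    rw [measure_toMeasurable, measure_toMeasurable] at this
    refine nonpos_iff_eq_zero.1 (ENNReal.le_of_add_le_add_left (measure_ne_top μ (T ∪ T')) ?_)
    rw [this, add_zero]
    exact h.trans hcover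
  have hs : s = T'ᶜ ∪ (s ∩ T') := by
    ext x
    by_cases hx : x ∈ T' <;> simp [hx]
    by_contra hxs
    exact hx (subset_toMeasurable μ sᶜ hxs)
  rw [hs]
  exact (measurableSet_toMeasurable μ sᶜ).compl.nullMeasurableSet.union_null
    (measure_mono_null (Set.inter_subset_inter_left _ (subset_toMeasurable μ s)) hTT')

theorem measure_preimage_le_sum_measure_fiber {α : Type*} [DecidableEq α] (f : X → α)
    (G : Finset α) : μ (f ⁻¹' G) ≤ ∑ a ∈ G, μ (f ⁻¹' {a}) := by
  rw [← Set.biUnion_preimage_singleton]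
  exact measure_biUnion_finset_le G _

variable [IsFiniteMeasure μ] {α : Type*} [Fintype α] [DecidableEq α] {f : X → α}

theorem nullMeasurableSet_preimage_of_sum_measure_fiber_le
    (h : ∑ a, μ (f ⁻¹' {a}) ≤ μ Set.univ) (G : Finset α) : NullMeasurableSet (f ⁻¹' G) μ := by
  refine nullMeasurableSet_of_measure_add_measure_compl_le ?_
  calc μ (f ⁻¹' G) + μ (f ⁻¹' G)ᶜ ≤ ∑ a ∈ G, μ (f ⁻¹' {a}) + ∑ a ∈ Gᶜ, μ (f ⁻¹' {a}) := by
        rw [← Set.preimage_compl, ← Finset.coe_compl]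
        exact add_le_add (measure_preimage_le_sum_measure_fiber f G)
          (measure_preimage_le_sum_measure_fiber f Gᶜ)
    _ = ∑ a, μ (f ⁻¹' {a}) := sum_add_sum_compl G _
    _ ≤ μ Set.univ := h

theorem measure_preimage_eq_sum_measure_fiber (h : ∑ a, μ (f ⁻¹' {a}) ≤ μ Set.univ)
    (G : Finset α) : μ (f ⁻¹' G) = ∑ a ∈ G, μ (f ⁻¹' {a}) := by
  rw [← Set.biUnion_preimage_singleton]
  refine measure_biUnion_finset₀ (fun a _ b _ hab => ?_) fun a _ => ?_
  · exact (Disjoint.preimage f (Set.disjoint_singleton.2 hab)).aedisjoint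
  · simpa using nullMeasurableSet_preimage_of_sum_measure_fiber_le h {a}

end OuterMeasure

section NatValued

variable {X : Type*} [MeasurableSpace X] {μ : Measure X} {f : X → ℕ}

theorem nullMeasurable_of_nullMeasurableSet_lt (hf : ∀ t, NullMeasurableSet {x | t < f x} μ) :
    NullMeasurable f μ := by
  refine measurable_to_countable' (β := NullMeasurableSpace X μ) fun t => ?_
  cases t with
  | zero =>
    have hfib : f ⁻¹' {0} = {x | 0 < f x}ᶜ := by ext x; simp
    exact (hfib ▸ (hf 0).compl : NullMeasurableSet (f ⁻¹' {0}) μ)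
  | succ m =>
    have hfib : f ⁻¹' {m + 1} = {x | m < f x} \ {x | m + 1 < f x} := by ext x; simp; omega
    exact (hfib ▸ (hf m).diff (hf (m + 1)) : NullMeasurableSet (f ⁻¹' {m + 1}) μ)

theorem natCast_eq_tsum_ite_lt (n : ℕ) : (n : ENNReal) = ∑' t : ℕ, if t < n then 1 else 0 := by
  rw [tsum_eq_sum (s := range n) fun t ht => if_neg (by simpa using ht),
    sum_congr rfl fun t ht => if_pos (mem_range.1 ht)]
  simp

theorem integral_natCast_eq_tsum_measure_lt (hf : ∀ t, NullMeasurableSet {x | t < f x} μ) :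
    ∫ x, (f x : ℝ) ∂μ = (∑' t, μ {x | t < f x}).toReal := by
  have hfm : AEMeasurable f μ := (nullMeasurable_of_nullMeasurableSet_lt hf).aemeasurable
  rw [integral_eq_lintegral_of_nonneg_ae (ae_of_all _ fun x => Nat.cast_nonneg _)
    (measurable_from_nat.comp_aemeasurable hfm).aestronglyMeasurable]
  congr 1
  calc ∫⁻ x, ENNReal.ofReal (f x) ∂μ = ∫⁻ x, ∑' t, {x | t < f x}.indicator 1 x ∂μ := by
        congr with x
        simp [Set.indicator_apply, natCast_eq_tsum_ite_lt]
    _ = ∑' t, μ {x | t < f x} := by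
        rw [lintegral_tsum fun t => ?_]
        · simp [lintegral_indicator_one₀ (hf _)]
        · exact aemeasurable_one.indicator₀ (hf t)

end NatValued

section Trajectories

variable {Ω : Type*}

def avoids (s : Ω) (t : ℕ) : Set (ℕ → Ω) := {ω | ∀ j < t, ω (j + 1) ≠ s}

theorem mem_iInter_avoids {s : Ω} {ω : ℕ → Ω} :
    ω ∈ ⋂ t, avoids s t ↔ ∀ j, ω (j + 1) ≠ s := by
  simp only [avoids, Set.mem_iInter, Set.mem_ofPred_eq]
  exact ⟨fun h j => h (j + 1) j j.lt_succ_self, fun h _ j _ => h j⟩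

theorem setOf_lt_retTime (s : Ω) (t : ℕ) :
    {ω | t < retTime s ω} = avoids s t \ ⋂ u, avoids s u := by
  ext ω
  rw [Set.mem_sdiff, mem_iInter_avoids, Set.mem_ofPred_eq, retTime]
  by_cases hret : ∃ j, ω (j + 1) = s
  · obtain ⟨j, hj⟩ := hret
    have hS : {m | 1 ≤ m ∧ ω m = s}.Nonempty := ⟨j + 1, by omega, hj⟩
    simp only [avoids, Set.mem_ofPred_eq, not_forall, not_not]
    refine ⟨fun ht => ⟨fun i hi his => ?_, j, hj⟩, ?_⟩
    · exact Nat.notMem_of_lt_sInf (s := {m | 1 ≤ m ∧ ω m = s}) (by omega) ⟨by omega, his⟩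
    rintro ⟨h, -⟩
    by_contra! hle
    obtain ⟨hm1, hms⟩ := Nat.sInf_mem hS
    obtain ⟨i, hi⟩ := Nat.exists_eq_add_of_le' hm1
    exact h i (by omega) (hi ▸ hms)
  · push Not at hret
    have hS : {m | 1 ≤ m ∧ ω m = s} = ∅ := by
      ext m
      simp only [Set.mem_ofPred_eq, Set.mem_empty_iff_false, iff_false, not_and]
      intro hm
      obtain ⟨i, rfl⟩ := Nat.exists_eq_add_of_le' hm
      exact hret i
    simp [hS, hret]

end Trajectories

section PathMeasure

variable {Ω : Type*} [Fintype Ω] [DecidableEq Ω]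

def pathPrefix (n : ℕ) (ω : ℕ → Ω) : Fin (n + 1) → Ω := fun i => ω i

theorem avoids_eq_preimage_pathPrefix (s : Ω) (t : ℕ) :
    avoids s t =
      pathPrefix t ⁻¹' ↑(univ.filter fun g : Fin (t + 1) → Ω => ∀ i : Fin t, g i.succ ≠ s) := by
  ext ω
  simp [avoids, pathPrefix, Fin.forall_iff]

variable [MeasurableSpace Ω]

def IsMarkovLaw (μ : Measure (ℕ → Ω)) (P : Matrix Ω Ω ℝ) (s : Ω) : Prop :=
  ∀ (n : ℕ) (g : Fin (n + 1) → Ω), μ (pathPrefix n ⁻¹' {g}) =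
    ENNReal.ofReal ((if g 0 = s then 1 else 0) * ∏ i : Fin n, P (g i.castSucc) (g i.succ))

variable {μ : Measure (ℕ → Ω)} [IsProbabilityMeasure μ] {P : Matrix Ω Ω ℝ} {s : Ω}

theorem sum_measure_pathPrefix_fiber (hP : P ∈ rowStochastic ℝ Ω) (hμ : IsMarkovLaw μ P s)
    (n : ℕ) : ∑ g, μ (pathPrefix n ⁻¹' {g}) = μ Set.univ := by
  simp_rw [hμ n]
  rw [← ENNReal.ofReal_sum_of_nonneg fun g _ => mul_nonneg (by positivity)
    (prod_nonneg fun i _ => nonneg_of_mem_rowStochastic hP),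
    sum_mul_prod_path_eq_dotProduct P n fun x => if x = s then 1 else 0,
    one_vecMul_of_mem_rowStochastic (pow_mem hP n)]
  simp [dotProduct]

theorem measure_avoids (hP : P ∈ rowStochastic ℝ Ω) (hμ : IsMarkovLaw μ P s) (t : ℕ) :
    μ (avoids s t) = ENNReal.ofReal ((taboo P s ^ t *ᵥ 1) s) := by
  rw [avoids_eq_preimage_pathPrefix, measure_preimage_eq_sum_measure_fiber
    (sum_measure_pathPrefix_fiber hP hμ t).le]
  simp_rw [hμ t]
  rw [← ENNReal.ofReal_sum_of_nonneg fun g _ => mul_nonneg (by positivity)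
    (prod_nonneg fun i _ => nonneg_of_mem_rowStochastic hP)]
  congr 1
  simp_rw [sum_filter, ← mul_ite_zero, ← prod_taboo_path]
  rw [sum_mul_prod_path_eq_dotProduct (taboo P s) t fun x => if x = s then 1 else 0]
  simp [dotProduct]

theorem nullMeasurableSet_avoids (hP : P ∈ rowStochastic ℝ Ω) (hμ : IsMarkovLaw μ P s) (t : ℕ) :
    NullMeasurableSet (avoids s t) μ := by
  rw [avoids_eq_preimage_pathPrefix]
  exact nullMeasurableSet_preimage_of_sum_measure_fiber_le
    (sum_measure_pathPrefix_fiber hP hμ t).le _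

theorem measure_iInter_avoids (hP : P ∈ rowStochastic ℝ Ω) (hirr : ∀ x y, ∃ k, 0 < (P ^ k) x y)
    (hμ : IsMarkovLaw μ P s) : μ (⋂ t, avoids s t) = 0 := by
  have hlim := ENNReal.tendsto_ofReal (tendsto_taboo_pow_mulVec_one hP hirr s (s := s))
  rw [ENNReal.ofReal_zero] at hlim
  exact nonpos_iff_eq_zero.1 <| ge_of_tendsto' hlim fun t =>
    (measure_mono (Set.iInter_subset _ t)).trans_eq (measure_avoids hP hμ t)

theorem integral_retTime_eq_inv (hP : P ∈ rowStochastic ℝ Ω) (hirr : ∀ x y, ∃ k, 0 < (P ^ k) x y)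
    {π : Ω → ℝ} (hπ : π ᵥ* P = π) (hπ1 : π ⬝ᵥ 1 = 1) (hs : π s ≠ 0) (hμ : IsMarkovLaw μ P s) :
    ∫ ω, (retTime s ω : ℝ) ∂μ = (π s)⁻¹ := by
  have hnever := measure_iInter_avoids hP hirr hμ
  have hsum := hasSum_taboo_pow_mulVec_one hP hirr hπ hπ1 hs
  have hnonneg (t : ℕ) := pow_mulVec_one_nonneg (taboo_nonneg hP (s := s)) t s
  rw [integral_natCast_eq_tsum_measure_lt fun t => by
    rw [setOf_lt_retTime]
    exact (nullMeasurableSet_avoids hP hμ t).diff (NullMeasurableSet.of_null hnever)]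
  simp_rw [setOf_lt_retTime, measure_sdiff_null hnever, measure_avoids hP hμ]
  rw [← ENNReal.ofReal_tsum_of_nonneg hnonneg hsum.summable, hsum.tsum_eq,
    ENNReal.toReal_ofReal (hsum.nonneg hnonneg)]

end PathMeasure

theorem stmt13_general {Ω : Type*} [Fintype Ω] [DecidableEq Ω] [MeasurableSpace Ω]
    (p : Ω → Ω → ℝ) (E : Ω → ℝ)
    (hstoch : ∀ x, (∀ y, 0 ≤ p x y) ∧ ∑ y, p x y = 1)
    (hirr : ∀ x y : Ω, ∃ n : ℕ, 0 < (Matrix.of p ^ n) x y)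
    (Z : ℝ) (hZ : Z = ∑ y, Real.exp (-E y))
    (π : Ω → ℝ) (hπ : ∀ x, π x = Real.exp (-E x) / Z)
    (hπstat : ∀ y, ∑ x, π x * p x y = π y)
    (s : Ω) (ZS : ℝ) (hZS : ZS = Real.exp (-E s))
    (μ : Measure (ℕ → Ω)) [IsProbabilityMeasure μ]
    (hμ : ∀ (n : ℕ) (g : Fin (n + 1) → Ω),
      (μ {ω | ∀ i : Fin (n + 1), ω (i : ℕ) = g i}).toReal =
        (if g 0 = s then 1 else 0) * ∏ i : Fin n, p (g i.castSucc) (g i.succ)) :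
    ∫ ω, ZS * (retTime s ω : ℝ) ∂μ = Z := by
  have hP : Matrix.of p ∈ rowStochastic ℝ Ω :=
    mem_rowStochastic_iff_sum.2 ⟨fun x y => (hstoch x).1 y, fun x => (hstoch x).2⟩
  have hlaw : IsMarkovLaw μ (Matrix.of p) s := fun n g => by
    simp only [Matrix.of_apply]
    rw [← hμ, ENNReal.ofReal_toReal (measure_ne_top μ _)]
    congr 1
    ext ω
    simp [pathPrefix, funext_iff]
  have hZpos : 0 < Z := hZ ▸ sum_pos (fun y _ => Real.exp_pos _) ⟨s, mem_univ s⟩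
  have hπ1 : π ⬝ᵥ 1 = 1 := by
    simp [dotProduct, hπ, ← sum_div, ← hZ, hZpos.ne']
  have hZSpos : 0 < ZS := hZS ▸ Real.exp_pos _
  have hπs : π s = ZS / Z := by rw [hπ, hZS]
  have hπs_ne : π s ≠ 0 := by rw [hπs]; positivity
  rw [integral_const_mul, integral_retTime_eq_inv hP hirr (funext hπstat) hπ1 hπs_ne hlaw, hπs,
    inv_div, mul_div_cancel₀ _ hZSpos.ne']

/-- **Unbiased partition function estimation.** For an irreducible
time-reversible Markov chain with stationary distribution proportional to
`exp (-E x)`, started at the collapsed stopping state `s` of weight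
`Z_S = exp (-E s)`, the estimator `Ẑ = Z_S · ξ` (stopping-set weight times
tour length) satisfies `E[Ẑ] = Z`, the partition function. -/
theorem stmt13 {Ω : Type*} [Fintype Ω] [DecidableEq Ω] [MeasurableSpace Ω]
    (p : Ω → Ω → ℝ) (E : Ω → ℝ)
    (hstoch : ∀ x, (∀ y, 0 ≤ p x y) ∧ ∑ y, p x y = 1)
    (hirr : ∀ x y : Ω, ∃ n : ℕ, 0 < (Matrix.of p ^ n) x y)
    (Z : ℝ) (hZ : Z = ∑ y, Real.exp (-E y))
    (π : Ω → ℝ) (hπ : ∀ x, π x = Real.exp (-E x) / Z)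
    (hrev : ∀ x y, π x * p x y = π y * p y x)
    (hπstat : ∀ y, ∑ x, π x * p x y = π y)
    (s : Ω) (ZS : ℝ) (hZS : ZS = Real.exp (-E s))
    (μ : Measure (ℕ → Ω)) [IsProbabilityMeasure μ]
    (hμ : ∀ (n : ℕ) (g : Fin (n + 1) → Ω),
      (μ {ω | ∀ i : Fin (n + 1), ω (i : ℕ) = g i}).toReal =
        (if g 0 = s then 1 else 0) * ∏ i : Fin n, p (g i.castSucc) (g i.succ)) :
    ∫ ω, ZS * (retTime s ω : ℝ) ∂μ = Z :=
  stmt13_general p E hstoch hirr Z hZ π hπ hπstat s ZS hZS μ hμ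
end
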